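/- arXiv:0704.0957 — 2 statements merged into one kernel-verified Lean document; each statement's English description precedes it below -/
import Mathlib

section
/- If Y is a Gamma(r, λ)-distributed random variable with r ≥ 1 and λ > 0, then for any t > 0, E[exp(-Y²/(2t))] ≤ e^{tλ²/2} (2λ²t)^{r/2} Γ(r/2)/(2Γ(r)). -/
/-!
Bounding `exp (-λ y) ≤ 1` under the Gamma density leaves the half-Gaussian moment
`∫₀^∞ y ^ (r - 1) exp (-y² / (2t)) dy = (2t) ^ (r / 2) Γ(r / 2) / 2`,
which already gives the bound without the factor `exp (t λ² / 2) ≥ 1`.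
-/

open Real MeasureTheory ProbabilityTheory Set

lemma integral_gammaMeasure {a r : ℝ} (ha : 0 < a) (hr : 0 < r) (f : ℝ → ℝ) :
    ∫ x, f x ∂gammaMeasure a r = ∫ x in Ioi 0, gammaPDFReal a r x * f x := by
  have hpdf : ∀ x, (gammaPDF a r x).toReal = gammaPDFReal a r x := fun x =>
    ENNReal.toReal_ofReal (gammaPDFReal_nonneg ha hr x)
  rw [gammaMeasure, integral_withDensity_eq_integral_toReal_smul
    (show Measurable (gammaPDF a r) from (measurable_gammaPDFReal a r).ennreal_ofReal)
    (ae_of_all _ fun _ => ENNReal.ofReal_lt_top)]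
  simp only [hpdf, smul_eq_mul]
  rw [← integral_Ici_eq_integral_Ioi]
  refine (setIntegral_eq_integral_of_forall_compl_eq_zero fun x hx => ?_).symm
  simp [gammaPDFReal, not_le.mpr (show x < 0 by simpa using hx)]

lemma gammaPDFReal_le {a r x : ℝ} (ha : 0 < a) (hr : 0 ≤ r) (hx : 0 ≤ x) :
    gammaPDFReal a r x ≤ r ^ a / Gamma a * x ^ (a - 1) := by
  have hΓ := Gamma_pos_of_pos ha
  rw [gammaPDFReal, if_pos hx]
  exact mul_le_of_le_one_right (by positivity) (exp_le_one_iff.mpr (by nlinarith))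

lemma integral_rpow_mul_exp_neg_sq_div {s t : ℝ} (hs : 0 < s) (ht : 0 < t) :
    ∫ x in Ioi 0, x ^ (s - 1) * exp (-x ^ 2 / (2 * t)) =
      (2 * t) ^ (s / 2) * Gamma (s / 2) / 2 := by
  have hexp : ∀ x : ℝ, -x ^ 2 / (2 * t) = -(2 * t)⁻¹ * x ^ (2 : ℝ) := fun x => by
    rw [rpow_two]; ring
  simp_rw [hexp]
  rw [integral_rpow_mul_exp_neg_mul_rpow two_pos (by linarith) (by positivity),
    inv_rpow (by positivity), ← rpow_neg (by positivity)]
  ring_nf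

theorem integral_exp_neg_sq_div_gammaMeasure_le {a r t : ℝ} (ha : 0 < a) (hr : 0 < r)
    (ht : 0 < t) :
    ∫ y, exp (-y ^ 2 / (2 * t)) ∂gammaMeasure a r ≤
      (2 * r ^ 2 * t) ^ (a / 2) * Gamma (a / 2) / (2 * Gamma a) := by
  have hΓ := Gamma_pos_of_pos ha
  have hmoment : IntegrableOn (fun x : ℝ => x ^ (a - 1) * exp (-x ^ 2 / (2 * t))) (Ioi 0) := by
    convert integrableOn_rpow_mul_exp_neg_mul_sq (b := (2 * t)⁻¹) (s := a - 1) (by positivity)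
      (by linarith) using 4
    ring
  rw [integral_gammaMeasure ha hr]
  calc ∫ x in Ioi 0, gammaPDFReal a r x * exp (-x ^ 2 / (2 * t))
      ≤ ∫ x in Ioi 0, r ^ a / Gamma a * (x ^ (a - 1) * exp (-x ^ 2 / (2 * t))) := by
        refine integral_mono_of_nonneg (ae_of_all _ fun x => ?_) (hmoment.const_mul _) ?_
        · exact mul_nonneg (gammaPDFReal_nonneg ha hr x) (exp_nonneg _)
        · refine (ae_restrict_iff' measurableSet_Ioi).mpr (ae_of_all _ fun x hx => ?_)
          dsimp only
          rw [← mul_assoc]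
          exact mul_le_mul_of_nonneg_right (gammaPDFReal_le ha hr.le (le_of_lt hx))
            (exp_nonneg _)
    _ = r ^ a / Gamma a * ((2 * t) ^ (a / 2) * Gamma (a / 2) / 2) := by
        rw [integral_const_mul, integral_rpow_mul_exp_neg_sq_div ha ht]
    _ = (2 * r ^ 2 * t) ^ (a / 2) * Gamma (a / 2) / (2 * Gamma a) := by
        have hsplit : (2 * r ^ 2 * t) ^ (a / 2) = r ^ a * (2 * t) ^ (a / 2) := by
          rw [show 2 * r ^ 2 * t = r ^ 2 * (2 * t) by ring,
            mul_rpow (by positivity) (by positivity), ← rpow_natCast, ← rpow_mul hr.le,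
            show ((2 : ℕ) : ℝ) * (a / 2) = a by push_cast; ring]
        rw [hsplit]
        field_simp

theorem stmt_0 (r lam t : ℝ) (hr : 1 ≤ r) (hlam : 0 < lam) (ht : 0 < t) :
    ∫ y, exp (-y ^ 2 / (2 * t)) ∂(gammaMeasure r lam) ≤
      exp (t * lam ^ 2 / 2) * (2 * lam ^ 2 * t) ^ (r / 2) * Gamma (r / 2) / (2 * Gamma r) := by
  have hr0 : 0 < r := by linarith
  calc _ ≤ (2 * lam ^ 2 * t) ^ (r / 2) * Gamma (r / 2) / (2 * Gamma r) :=
        integral_exp_neg_sq_div_gammaMeasure_le hr0 hlam ht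
    _ ≤ exp (t * lam ^ 2 / 2) * ((2 * lam ^ 2 * t) ^ (r / 2) * Gamma (r / 2) / (2 * Gamma r)) :=
        le_mul_of_one_le_left (by positivity) (one_le_exp (by positivity))
    _ = _ := by ring
end

section
/- For integers 1 ≤ J < N with 2J/N ≤ (log 2)/2, the ratio ∏_{i=1}^{J}(1 - i/N)² / ∏_{i=1}^{J}(1 - 2i/N) satisfies e^{-J(J+1)/N} ≤ ratio ≤ e^{J(J+1)/N}. -/
/-!
Writing `x = i / N`, which lies in `[0, 1/4]` because `log 2 < 1`, each factor satisfies
`1 - 2x ≤ (1 - x)² ≤ e^{-2x}` and `e^{-4x} ≤ 1 - 2x`. Hence the ratio is at least `1` and at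
most `e^{-2S} / e^{-4S} = e^{2S}`, where `2S = 2 ∑ i / N = J (J + 1) / N`.
-/

open Real Finset

lemma exp_neg_four_mul_le_one_sub_two_mul {x : ℝ} (hx₀ : 0 ≤ x) (hx : x ≤ 1 / 4) :
    exp (-(4 * x)) ≤ 1 - 2 * x := by
  have hpos : 0 < 1 + 4 * x := by linarith
  calc exp (-(4 * x)) = (exp (4 * x))⁻¹ := exp_neg _
    _ ≤ (1 + 4 * x)⁻¹ := inv_anti₀ hpos (by linarith [add_one_le_exp (4 * x)])
    _ ≤ 1 - 2 * x := by
      rw [inv_le_iff_one_le_mul₀ hpos]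
      nlinarith

section ProdRatio

variable {ι : Type*} (s : Finset ι) {x : ι → ℝ}

lemma one_le_prod_one_sub_sq_div_prod (hx : ∀ i ∈ s, x i < 1 / 2) :
    1 ≤ (∏ i ∈ s, (1 - x i) ^ 2) / ∏ i ∈ s, (1 - 2 * x i) := by
  have hpos : 0 < ∏ i ∈ s, (1 - 2 * x i) :=
    prod_pos fun i hi => by linarith [hx i hi]
  rw [one_le_div hpos]
  exact prod_le_prod (fun i hi => by linarith [hx i hi]) fun i _ => by nlinarith [sq_nonneg (x i)]

lemma prod_one_sub_sq_div_prod_le_exp (hx₀ : ∀ i ∈ s, 0 ≤ x i)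
    (hx : ∀ i ∈ s, x i ≤ 1 / 4) :
    (∏ i ∈ s, (1 - x i) ^ 2) / ∏ i ∈ s, (1 - 2 * x i) ≤ exp (2 * ∑ i ∈ s, x i) := by
  have hnum : ∏ i ∈ s, (1 - x i) ^ 2 ≤ exp (-(2 * ∑ i ∈ s, x i)) := by
    rw [mul_sum, ← sum_neg_distrib, exp_sum]
    refine prod_le_prod (fun i _ => sq_nonneg _) fun i hi => ?_
    simpa using one_sub_div_pow_le_exp_neg (n := 2) (t := 2 * x i)
      (by push_cast; linarith [hx i hi])
  have hden : exp (-(4 * ∑ i ∈ s, x i)) ≤ ∏ i ∈ s, (1 - 2 * x i) := by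
    rw [mul_sum, ← sum_neg_distrib, exp_sum]
    exact prod_le_prod (fun i _ => (exp_pos _).le)
      fun i hi => exp_neg_four_mul_le_one_sub_two_mul (hx₀ i hi) (hx i hi)
  calc (∏ i ∈ s, (1 - x i) ^ 2) / ∏ i ∈ s, (1 - 2 * x i)
      ≤ exp (-(2 * ∑ i ∈ s, x i)) / exp (-(4 * ∑ i ∈ s, x i)) :=
        div_le_div₀ (exp_pos _).le hnum (exp_pos _) hden
    _ = exp (2 * ∑ i ∈ s, x i) := by rw [← exp_sub]; ring_nf

end ProdRatio

lemma sum_Icc_one_natCast (J : ℕ) : ∑ i ∈ Icc 1 J, (i : ℝ) = J * (J + 1) / 2 := by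
  induction J with
  | zero => simp
  | succ n ih =>
    rw [sum_Icc_succ_top (by omega), ih]
    push_cast
    ring

theorem stmt_5_general (J N : ℕ)
    (h : 2 * (J : ℝ) / N ≤ Real.log 2 / 2) :
    exp (-(J * (J + 1) / N : ℝ)) ≤
      (∏ i ∈ Icc 1 J, (1 - (i : ℝ) / N) ^ 2) / (∏ i ∈ Icc 1 J, (1 - 2 * (i : ℝ) / N)) ∧
    (∏ i ∈ Icc 1 J, (1 - (i : ℝ) / N) ^ 2) / (∏ i ∈ Icc 1 J, (1 - 2 * (i : ℝ) / N)) ≤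
      exp ((J * (J + 1) / N : ℝ)) := by
  have hJ_le : (J : ℝ) / N ≤ 1 / 4 := by
    rw [mul_div_assoc] at h
    linarith [log_two_lt_d9]
  have hx₀ : ∀ i ∈ Icc 1 J, 0 ≤ (i : ℝ) / N := fun i _ => by positivity
  have hx : ∀ i ∈ Icc 1 J, (i : ℝ) / N ≤ 1 / 4 := fun i hi =>
    le_trans (by gcongr; exact_mod_cast (mem_Icc.mp hi).2) hJ_le
  have hsum : 2 * ∑ i ∈ Icc 1 J, (i : ℝ) / N = J * (J + 1) / N := by
    rw [← sum_div, sum_Icc_one_natCast]; ring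
  simp only [mul_div_assoc (2 : ℝ)]
  constructor
  · calc exp (-(J * (J + 1) / N : ℝ)) ≤ 1 :=
          exp_le_one_iff.mpr (by simp only [neg_nonpos]; positivity)
      _ ≤ _ := one_le_prod_one_sub_sq_div_prod _ fun i hi => by linarith [hx i hi]
  · rw [← hsum]
    exact prod_one_sub_sq_div_prod_le_exp _ hx₀ hx

theorem stmt_5 (J N : ℕ) (hJ : 1 ≤ J) (hJN : J < N)
    (h : 2 * (J : ℝ) / N ≤ Real.log 2 / 2) :
    exp (-(J * (J + 1) / N : ℝ)) ≤
      (∏ i ∈ Icc 1 J, (1 - (i : ℝ) / N) ^ 2) / (∏ i ∈ Icc 1 J, (1 - 2 * (i : ℝ) / N)) ∧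
    (∏ i ∈ Icc 1 J, (1 - (i : ℝ) / N) ^ 2) / (∏ i ∈ Icc 1 J, (1 - 2 * (i : ℝ) / N)) ≤
      exp ((J * (J + 1) / N : ℝ)) :=
  stmt_5_general J N h
end
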